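/- arXiv:2106.09322 — 3 statements merged into one kernel-verified Lean document; each statement's English description precedes it below -/
import Mathlib

section
/- For all real x > 0 and fixed x̃ > 0, the inequality √(2x/(1+x)) ≤ ρ(x̃)·ln(1+x) + η(x̃) holds, where ρ(x̃) = 1/√(2x̃(1+x̃)) and η(x̃) = √(2x̃/(1+x̃)) − ρ(x̃)·ln(1+x̃), with equality when x = x̃. -/
/-!
Writing `t = log (1 + x)`, the function `√(2x/(1+x)) = √(2 - 2 e^{-t})` is concave in `t`, so it
lies below its tangent line at `t = log (1 + x̃)`. Concretely, the tangent-line bound for `√` at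
`2x̃/(1+x̃)` is combined with the tangent-line bound `1 - 1/r ≤ log r` for the logarithm.
-/

open Real

lemma Real.sqrt_le_sqrt_add_sub_div {u v : ℝ} (hu : 0 ≤ u) (hv : 0 < v) :
    √u ≤ √v + (u - v) / (2 * √v) := by
  have hsv : 0 < √v := sqrt_pos.mpr hv
  rw [← sub_le_iff_le_add', le_div_iff₀ (by positivity)]
  nlinarith [sq_nonneg (√u - √v), sq_sqrt hu, sq_sqrt hv.le]

lemma Real.inv_sub_inv_le_log_sub_log_div {p q : ℝ} (hp : 0 < p) (hq : 0 < q) :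
    q⁻¹ - p⁻¹ ≤ (log p - log q) / q := by
  have h := one_sub_inv_le_log_of_pos (div_pos hp hq)
  rw [log_div hp.ne' hq.ne', inv_div] at h
  rw [le_div_iff₀ hq]
  calc (q⁻¹ - p⁻¹) * q = 1 - q / p := by field_simp
    _ ≤ log p - log q := h

lemma Real.sqrt_div_mul_self {a b : ℝ} (hb : 0 < b) : √(a / b) * b = √(a * b) := by
  calc √(a / b) * b = √(a / b) * √(b ^ 2) := by rw [sqrt_sq hb.le]
    _ = √(a * b) := by
      rw [← sqrt_mul' _ (sq_nonneg b)]
      congr 1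
      field_simp

theorem tangent_log_upper_bound (xt : ℝ) (hxt : 0 < xt) :
    (∀ x : ℝ, 0 < x →
      Real.sqrt (2 * x / (1 + x)) ≤
        (1 / Real.sqrt (2 * xt * (1 + xt))) * Real.log (1 + x) +
          (Real.sqrt (2 * xt / (1 + xt)) -
            (1 / Real.sqrt (2 * xt * (1 + xt))) * Real.log (1 + xt))) ∧
    Real.sqrt (2 * xt / (1 + xt)) =
      (1 / Real.sqrt (2 * xt * (1 + xt))) * Real.log (1 + xt) +
        (Real.sqrt (2 * xt / (1 + xt)) -
          (1 / Real.sqrt (2 * xt * (1 + xt))) * Real.log (1 + xt)) := by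
  refine ⟨fun x hx => ?_, by ring⟩
  have hv : 0 < 2 * xt / (1 + xt) := by positivity
  have hslope : 1 / √(2 * xt * (1 + xt)) = 1 / (√(2 * xt / (1 + xt)) * (1 + xt)) := by
    rw [sqrt_div_mul_self (by positivity)]
  have hdiff : 2 * x / (1 + x) - 2 * xt / (1 + xt) = 2 * ((1 + xt)⁻¹ - (1 + x)⁻¹) := by
    field_simp
    ring
  have hlog :=
    inv_sub_inv_le_log_sub_log_div (p := 1 + x) (q := 1 + xt) (by positivity) (by positivity)
  calc √(2 * x / (1 + x))
      ≤ √(2 * xt / (1 + xt)) +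
          (2 * x / (1 + x) - 2 * xt / (1 + xt)) / (2 * √(2 * xt / (1 + xt))) :=
        sqrt_le_sqrt_add_sub_div (by positivity) hv
    _ ≤ √(2 * xt / (1 + xt)) + 2 * ((log (1 + x) - log (1 + xt)) / (1 + xt)) /
          (2 * √(2 * xt / (1 + xt))) := by
        rw [hdiff]
        gcongr
    _ = _ := by
        rw [hslope]
        field_simp
        ring
end

section
/- Fix x̃ > 0 and let F(x) = ρ(x̃)·ln(1+x) + η(x̃) − √(2x/(1+x)) with ρ(x̃) = 1/√(2x̃(1+x̃)) and η(x̃) = √(2x̃/(1+x̃)) − ρ(x̃)·ln(1+x̃). Then F is strictly decreasing on (0, x̃) and strictly increasing on (x̃, ∞), so x̃ is the unique global minimizer of F on (0,∞) with F(x̃) = 0. -/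
/-!
With `s x = √(2x(1+x))`, the derivative of `√(2x/(1+x))` is `1/(s x (1+x))`, while that of
`ρ log(1+x)` is `ρ/(1+x)`. So `F' x = (1/s x̃ - 1/s x)/(1+x)`, and since `s` is strictly
increasing on `(0,∞)`, `F'` has the sign of `x - x̃`. The constant `η` is chosen so that `F x̃ = 0`.
-/

open Real Set

noncomputable def tangentGap (ρ η x : ℝ) : ℝ :=
  ρ * log (1 + x) + η - √(2 * x / (1 + x))

lemma sqrt_two_mul_div_one_add {x : ℝ} (hx : 0 < x) :
    √(2 * x / (1 + x)) = √(2 * x * (1 + x)) / (1 + x) := by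
  have h1 : 0 < 1 + x := by linarith
  rw [show 2 * x / (1 + x) = 2 * x * (1 + x) / (1 + x) ^ 2 by field_simp,
    sqrt_div (by positivity), sqrt_sq h1.le]

lemma hasDerivAt_sqrt_two_mul_div_one_add {x : ℝ} (hx : 0 < x) :
    HasDerivAt (fun y => √(2 * y / (1 + y))) (1 / (√(2 * x * (1 + x)) * (1 + x))) x := by
  have h1 : 0 < 1 + x := by linarith
  have hquot : HasDerivAt (fun y : ℝ => 2 * y / (1 + y))
      ((2 * 1 * (1 + x) - 2 * x * (0 + 1)) / (1 + x) ^ 2) x :=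
    ((hasDerivAt_id x).const_mul 2).div ((hasDerivAt_const x 1).add (hasDerivAt_id x)) h1.ne'
  refine ((hasDerivAt_sqrt (by positivity)).comp x hquot).congr_deriv ?_
  have hs : 0 < √(2 * x * (1 + x)) := sqrt_pos.2 (by positivity)
  rw [sqrt_two_mul_div_one_add hx]
  field_simp
  ring

lemma hasDerivAt_tangentGap (ρ η : ℝ) {x : ℝ} (hx : 0 < x) :
    HasDerivAt (tangentGap ρ η) ((ρ - 1 / √(2 * x * (1 + x))) / (1 + x)) x := by
  have h1 : 0 < 1 + x := by linarith
  have hlog : HasDerivAt (fun y : ℝ => log (1 + y)) ((0 + 1) / (1 + x)) x :=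
    ((hasDerivAt_const x 1).add (hasDerivAt_id x)).log h1.ne'
  refine (((hlog.const_mul ρ).add_const η).sub
    (hasDerivAt_sqrt_two_mul_div_one_add hx)).congr_deriv ?_
  have hs : 0 < √(2 * x * (1 + x)) := sqrt_pos.2 (by positivity)
  field_simp
  ring

lemma continuousOn_tangentGap (ρ η : ℝ) : ContinuousOn (tangentGap ρ η) (Ioi 0) :=
  fun _ hx => (hasDerivAt_tangentGap ρ η hx).continuousAt.continuousWithinAt

lemma one_div_sqrt_two_mul_one_add_lt {x y : ℝ} (hx : 0 < x) (hxy : x < y) :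
    1 / √(2 * y * (1 + y)) < 1 / √(2 * x * (1 + x)) := by
  apply one_div_lt_one_div_of_lt (sqrt_pos.2 (by positivity))
  exact sqrt_lt_sqrt (by positivity) (by nlinarith)

lemma tangentGap_strictAntiOn (xt η : ℝ) :
    StrictAntiOn (tangentGap (1 / √(2 * xt * (1 + xt))) η) (Ioc 0 xt) := by
  refine strictAntiOn_of_deriv_neg (convex_Ioc 0 xt)
    ((continuousOn_tangentGap _ η).mono fun _ hx => hx.1) fun x hx => ?_
  rw [interior_Ioc] at hx
  rw [(hasDerivAt_tangentGap _ η hx.1).deriv]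
  have hslope := one_div_sqrt_two_mul_one_add_lt hx.1 hx.2
  exact div_neg_of_neg_of_pos (by linarith) (by linarith [hx.1])

lemma tangentGap_strictMonoOn {xt : ℝ} (hxt : 0 < xt) (η : ℝ) :
    StrictMonoOn (tangentGap (1 / √(2 * xt * (1 + xt))) η) (Ici xt) := by
  refine strictMonoOn_of_deriv_pos (convex_Ici xt)
    ((continuousOn_tangentGap _ η).mono fun _ hx => hxt.trans_le hx) fun x hx => ?_
  rw [interior_Ici] at hx
  rw [(hasDerivAt_tangentGap _ η (hxt.trans hx)).deriv]
  have hslope := one_div_sqrt_two_mul_one_add_lt hxt hx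
  exact div_pos (by linarith) (by linarith [hxt.trans hx])

theorem F_min_at_tangent_point (xt : ℝ) (hxt : 0 < xt) :
    let ρ : ℝ := 1 / Real.sqrt (2 * xt * (1 + xt))
    let η : ℝ := Real.sqrt (2 * xt / (1 + xt)) - ρ * Real.log (1 + xt)
    let F : ℝ → ℝ := fun x => ρ * Real.log (1 + x) + η - Real.sqrt (2 * x / (1 + x))
    StrictAntiOn F (Set.Ioo 0 xt) ∧
    StrictMonoOn F (Set.Ioi xt) ∧
    F xt = 0 ∧
    ∀ x ∈ Set.Ioi (0 : ℝ), x ≠ xt → F xt < F x := by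
  intro ρ η F
  have hanti : StrictAntiOn F (Ioc 0 xt) := tangentGap_strictAntiOn xt η
  have hmono : StrictMonoOn F (Ici xt) := tangentGap_strictMonoOn hxt η
  refine ⟨hanti.mono Ioo_subset_Ioc_self, hmono.mono Ioi_subset_Ici_self, by simp [F, η], ?_⟩
  intro x hx hne
  rcases hne.lt_or_gt with hlt | hgt
  · exact hanti ⟨hx, hlt.le⟩ ⟨hxt, le_rfl⟩ hlt
  · exact hmono self_mem_Ici hgt.le hgt
end

section
/- For positive reals γ_1,…,γ_T and any positive γ̃_1,…,γ̃_T, √(∑_{t=1}^T 2γ_t/(1+γ_t)) ≤ ∑_{t=1}^T [ρ(γ̃_t)·ln(1+γ_t) + η(γ̃_t)], where ρ(y) = 1/√(2y(1+y)) and η(y) = √(2y/(1+y)) − ρ(y)·ln(1+y). -/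
/-!
Subadditivity of `√` on nonnegative reals reduces the claim to one term at a time. With
`g x = √(2x/(1+x))`, the bound for a term is the tangent line of `g` at `y` taken in the variable
`log (1 + x)`: its slope there is `(1 + y) g'(y) = 1/√(2y(1+y))`. It follows by composing the tangent
line of `√` at `2y/(1+y)` with `(u - v)/u ≤ log u - log v`.
-/

open Real

namespace Real

lemma sqrt_add_le_sqrt_add_sqrt {a b : ℝ} (ha : 0 ≤ a) (hb : 0 ≤ b) : √(a + b) ≤ √a + √b := by
  rw [sqrt_le_left (by positivity)]
  nlinarith [sq_sqrt ha, sq_sqrt hb, mul_nonneg (sqrt_nonneg a) (sqrt_nonneg b)]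

lemma sqrt_sum_le_sum_sqrt {ι : Type*} (s : Finset ι) {f : ι → ℝ} (hf : ∀ i ∈ s, 0 ≤ f i) :
    √(∑ i ∈ s, f i) ≤ ∑ i ∈ s, √(f i) :=
  Finset.le_sum_of_subadditive_on_pred _ (0 ≤ ·) (by simp)
    (fun _ _ ↦ sqrt_add_le_sqrt_add_sqrt) (fun _ _ ↦ add_nonneg) f hf

lemma sqrt_le_sqrt_add_sub_div_s5 {a b : ℝ} (ha : 0 ≤ a) (hb : 0 < b) :
    √a ≤ √b + (a - b) / (2 * √b) := by
  have hb' : 0 < √b := sqrt_pos.mpr hb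
  rw [← sub_le_iff_le_add', le_div_iff₀ (by positivity)]
  nlinarith [sq_sqrt ha, sq_sqrt hb.le, sq_nonneg (√a - √b)]

lemma sub_div_le_log_sub_log {u v : ℝ} (hu : 0 < u) (hv : 0 < v) :
    (u - v) / u ≤ log u - log v := by
  have := one_sub_inv_le_log_of_pos (div_pos hu hv)
  rwa [inv_div, log_div hu.ne' hv.ne', one_sub_div hu.ne'] at this

end Real

lemma sqrt_two_mul_div_one_add_le {x y : ℝ} (hx : 0 ≤ x) (hy : 0 < y) :
    √(2 * x / (1 + x)) ≤
      √(2 * y / (1 + y)) + (log (1 + x) - log (1 + y)) / √(2 * y * (1 + y)) := by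
  set r := √(2 * y * (1 + y))
  have hsqrt : √(2 * y / (1 + y)) = r / (1 + y) := by
    rw [show 2 * y / (1 + y) = 2 * y * (1 + y) / (1 + y) ^ 2 by field_simp,
      sqrt_div' _ (by positivity), sqrt_sq (by positivity)]
  calc √(2 * x / (1 + x))
      ≤ √(2 * y / (1 + y)) + (2 * x / (1 + x) - 2 * y / (1 + y)) / (2 * √(2 * y / (1 + y))) :=
        sqrt_le_sqrt_add_sub_div_s5 (by positivity) (by positivity)
    _ = √(2 * y / (1 + y)) + ((1 + x) - (1 + y)) / (1 + x) / r := by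
        rw [hsqrt]
        field_simp
        ring
    _ ≤ √(2 * y / (1 + y)) + (log (1 + x) - log (1 + y)) / r := by
        gcongr
        exact sub_div_le_log_sub_log (by positivity) (by positivity)

theorem sqrt_sum_dispersion_bound (T : ℕ) (γ γt : Fin T → ℝ)
    (hγ : ∀ t, 0 < γ t) (hγt : ∀ t, 0 < γt t) :
    Real.sqrt (∑ t, 2 * γ t / (1 + γ t)) ≤
      ∑ t, ((1 / Real.sqrt (2 * γt t * (1 + γt t))) * Real.log (1 + γ t) +
        (Real.sqrt (2 * γt t / (1 + γt t)) -
          (1 / Real.sqrt (2 * γt t * (1 + γt t))) * Real.log (1 + γt t))) := by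
  refine (sqrt_sum_le_sum_sqrt _ fun t _ ↦ ?_).trans (Finset.sum_le_sum fun t _ ↦ ?_)
  · have := hγ t
    positivity
  · have := sqrt_two_mul_div_one_add_le (hγ t).le (hγt t)
    exact this.trans_eq (by ring)
end
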